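/- arXiv:1712.01614 — 8 statements merged into one kernel-verified Lean document; each statement's English description precedes it below -/
import Mathlib

section
/- If a finite empirical model e is logically contextual, then e is probabilistically contextual: there exists no global probability distribution e_X on O^X whose marginal to each maximal context C equals e_C. -/
/-- A section (event) over a finite set of measurements `U`: an assignment of an
outcome to each measurement in `U`. -/
abbrev Sec {X : Type*} (U : Finset X) (O : Type*) := {x : X // x ∈ U} → O

/-- Restriction of a section over `V` to a subset `U ⊆ V`. -/
def resSec {X O : Type*} {U V : Finset X} (h : U ⊆ V) (s : Sec V O) : Sec U O :=
  fun x => s ⟨x.1, h x.2⟩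

/-- The section over the singleton `{x}` induced by a section over `U ∋ x`. -/
def singleSec {X O : Type*} {U : Finset X} (x : X) (hx : x ∈ U) (s : Sec U O) :
    Sec ({x} : Finset X) O := fun _ => s ⟨x, hx⟩

/-- Restriction of a global section `s : X → O` to a context `C`. -/
def restrictGlobal {X O : Type*} (s : X → O) (C : Finset X) : Sec C O := fun x => s x.1

/-- Marginalization of the distribution `e C` to a subcontext `U ⊆ C`. -/
def margin {X O : Type*} [Fintype X] [DecidableEq X] [Fintype O] [DecidableEq O]
    (e : (C : Finset X) → Sec C O → ℝ) (C U : Finset X) (hU : U ⊆ C) (s : Sec U O) : ℝ :=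
  ∑ t ∈ Finset.univ.filter (fun t : Sec C O => resSec hU t = s), e C t

/-- An empirical model on the scenario `(X, M, O)`: `M` covers `X`, each `e C` for
`C ∈ M` is a probability distribution on sections over `C`, and the family satisfies
the compatibility (generalized no-signaling) condition. -/
def IsEmpiricalModel {X O : Type*} [Fintype X] [DecidableEq X] [Fintype O] [DecidableEq O]
    (M : Finset (Finset X)) (e : (C : Finset X) → Sec C O → ℝ) : Prop :=
  (∀ x : X, ∃ C ∈ M, x ∈ C) ∧
  (∀ C ∈ M, (∀ t : Sec C O, 0 ≤ e C t) ∧ ∑ t : Sec C O, e C t = 1) ∧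
  (∀ C ∈ M, ∀ C' ∈ M, ∀ t : Sec ((C ∩ C') : Finset X) O,
    margin e C (C ∩ C') Finset.inter_subset_left t
      = margin e C' (C ∩ C') Finset.inter_subset_right t)

/-- A global section consistent with the support of the model. -/
def ConsistentGlobal {X O : Type*} (M : Finset (Finset X))
    (e : (C : Finset X) → Sec C O → ℝ) (s : X → O) : Prop :=
  ∀ C ∈ M, e C (restrictGlobal s C) ≠ 0

/-- Strong contextuality: no global section is consistent with the support. -/
def StronglyContextual {X O : Type*} (M : Finset (Finset X))
    (e : (C : Finset X) → Sec C O → ℝ) : Prop :=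
  ¬ ∃ s : X → O, ConsistentGlobal M e s

/-- Logical contextuality: some section in the support of some `e C` does not extend
to a global section consistent with the support. -/
def LogicallyContextual {X O : Type*} (M : Finset (Finset X))
    (e : (C : Finset X) → Sec C O → ℝ) : Prop :=
  ∃ C ∈ M, ∃ t : Sec C O, e C t ≠ 0 ∧
    ¬ ∃ s : X → O, restrictGlobal s C = t ∧ ConsistentGlobal M e s

/-- Probabilistic contextuality: no global distribution marginalizes to every `e C`. -/
def ProbabilisticallyContextual {X O : Type*} [Fintype X] [DecidableEq X]
    [Fintype O] [DecidableEq O] (M : Finset (Finset X))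
    (e : (C : Finset X) → Sec C O → ℝ) : Prop :=
  ¬ ∃ d : (X → O) → ℝ, (∀ s, 0 ≤ d s) ∧ (∑ s, d s = 1) ∧
    ∀ C ∈ M, ∀ t : Sec C O,
      (∑ s ∈ Finset.univ.filter (fun s : X → O => restrictGlobal s C = t), d s) = e C t

/-- **Logical contextuality implies probabilistic contextuality**: if some section in
the support of some `e C` does not extend to a global section consistent with the
support, then no global distribution on `O^X` marginalizes to every `e C`. -/
theorem logical_implies_probabilistic {X O : Type*} [Fintype X] [DecidableEq X]
    [Fintype O] [DecidableEq O]
    (M : Finset (Finset X)) (e : (C : Finset X) → Sec C O → ℝ)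
    (hmodel : IsEmpiricalModel M e)
    (h : LogicallyContextual M e) : ProbabilisticallyContextual M e := by
  rintro ⟨d, hd0, _, hdm⟩
  obtain ⟨C, hC, t, ht0, hnext⟩ := h
  -- any s with d s ≠ 0 is consistent
  have hcons : ∀ s : X → O, d s ≠ 0 → ConsistentGlobal M e s := by
    intro s hs C' hC'
    have hsum := hdm C' hC' (restrictGlobal s C')
    intro he0
    have hzero : ∀ u ∈ Finset.univ.filter
        (fun u : X → O => restrictGlobal u C' = restrictGlobal s C'), d u = 0 := by
      intro u hu
      by_contra hu0
      have hle : d u ≤ ∑ v ∈ Finset.univ.filter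
          (fun v : X → O => restrictGlobal v C' = restrictGlobal s C'), d v :=
        Finset.single_le_sum (fun v _ => hd0 v) hu
      have : 0 < d u := lt_of_le_of_ne (hd0 u) (Ne.symm hu0)
      rw [hsum, he0] at hle
      linarith
    exact hs (hzero s (by simp))
  have hsum := hdm C hC t
  have hzero : ∀ u ∈ Finset.univ.filter (fun u : X → O => restrictGlobal u C = t),
      d u = 0 := by
    intro u hu
    by_contra hu0
    exact hnext ⟨u, (Finset.mem_filter.mp hu).2, hcons u hu0⟩
  rw [Finset.sum_eq_zero hzero] at hsum
  exact ht0 hsum.symm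
end

section
/- Let Y be a finite set, Σ ⊆ P(Y), and μ : Σ → [0,1]. If μ extends to a finitely additive probability measure μ' on the algebra generated by Σ (a classical extension), then μ is not Dutch Bookable: there exist no finite collection V ⊆ Σ and stakes s : V → ℝ such that for every y ∈ Y, Σ_{A∈V} s(A)·(χ_A(y) − μ(A)) < 0. -/
open MeasureTheory

private lemma finadd_biUnion_sum {Y : Type*} {M : MeasurableSpace Y} (mu' : Set Y → ℝ)
    (h0 : mu' ∅ = 0)
    (hadd : ∀ A B : Set Y, MeasurableSet[M] A → MeasurableSet[M] B → Disjoint A B →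
      mu' (A ∪ B) = mu' A + mu' B)
    (s : Finset (Set Y)) (hm : ∀ c ∈ s, MeasurableSet[M] c)
    (hd : (s : Set (Set Y)).PairwiseDisjoint id) :
    mu' (⋃ c ∈ s, c) = ∑ c ∈ s, mu' c := by
  classical
  induction s using Finset.induction_on with
  | empty => simpa
  | @insert a s ha ih =>
    have hms : ∀ c ∈ s, MeasurableSet[M] c := fun c hc => hm c (Finset.mem_insert_of_mem hc)
    have hds : (s : Set (Set Y)).PairwiseDisjoint id :=
      hd.subset (by simp [Finset.coe_subset])
    have hdisj : Disjoint a (⋃ c ∈ s, c) := by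
      rw [Set.disjoint_iUnion₂_right]
      intro c hc
      exact hd (Finset.mem_coe.2 (Finset.mem_insert_self a s))
        (Finset.mem_coe.2 (Finset.mem_insert_of_mem hc)) (fun h => ha (h ▸ hc))
    have hmu : MeasurableSet[M] (⋃ c ∈ s, c) := Finset.measurableSet_biUnion s hms
    rw [Finset.set_biUnion_insert, hadd a _ (hm a (Finset.mem_insert_self a s)) hmu hdisj,
      ih hms hds, Finset.sum_insert ha]

/-- **A classical extension rules out Dutch Books.** Let `Y` be finite, `Σ` a
collection of subsets of `Y`, and `μ : Σ → [0,1]`. If `μ` extends to a finitely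
additive probability measure `μ'` on the (σ-)algebra generated by `Σ` (which, `Y`
being finite, coincides with the generated algebra), then `μ` is not Dutch
Bookable: there are no finite `V ⊆ Σ` and stakes `s : V → ℝ` such that every
valuation point `y ∈ Y` yields a strictly negative payoff. -/
theorem classical_extension_not_dutch_bookable {Y : Type*} [Finite Y]
    (Sigma : Set (Set Y)) (mu : Set Y → ℝ)
    (hrange : ∀ A ∈ Sigma, 0 ≤ mu A ∧ mu A ≤ 1)
    (mu' : Set Y → ℝ)
    (hext : ∀ A ∈ Sigma, mu' A = mu A)
    (hnn : ∀ A : Set Y, MeasurableSet[MeasurableSpace.generateFrom Sigma] A → 0 ≤ mu' A)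
    (huniv : mu' Set.univ = 1)
    (hadd : ∀ A B : Set Y, MeasurableSet[MeasurableSpace.generateFrom Sigma] A →
      MeasurableSet[MeasurableSpace.generateFrom Sigma] B → Disjoint A B →
      mu' (A ∪ B) = mu' A + mu' B) :
    ¬ ∃ (V : Finset (Set Y)) (st : Set Y → ℝ), ↑V ⊆ Sigma ∧
      ∀ y : Y, (∑ A ∈ V, st A * (Set.indicator A (fun _ => (1 : ℝ)) y - mu A)) < 0 := by
  classical
  set M := MeasurableSpace.generateFrom Sigma with hM
  -- μ'(∅) = 0
  have h0 : mu' (∅ : Set Y) = 0 := by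
    have := hadd ∅ ∅ MeasurableSet.empty MeasurableSet.empty (disjoint_bot_left)
    simp at this
    linarith
  rintro ⟨V, st, hVS, hneg⟩
  rcases isEmpty_or_nonempty Y with hY | hY
  · -- Y empty: univ = ∅, so 1 = 0
    have : (Set.univ : Set Y) = ∅ := Set.univ_eq_empty_iff.2 hY
    rw [this, h0] at huniv
    norm_num at huniv
  · cases nonempty_fintype Y
    -- measurability of members of V
    have hVm : ∀ A ∈ V, MeasurableSet[M] A := fun A hA =>
      MeasurableSpace.measurableSet_generateFrom (hVS hA)
    -- cells of the partition generated by V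
    set cell : Y → Set Y := fun y => ⋂ A ∈ V, (if y ∈ A then A else Aᶜ) with hcell
    have hmem : ∀ y, y ∈ cell y := by
      intro y
      simp only [hcell, Set.mem_iInter]
      intro A hA
      split <;> simp_all
    have hcellm : ∀ y, MeasurableSet[M] (cell y) := by
      intro y
      apply Finset.measurableSet_biInter
      intro A hA
      split
      · exact hVm A hA
      · exact (hVm A hA).compl
    have hiff : ∀ y z, z ∈ cell y → ∀ A ∈ V, (z ∈ A ↔ y ∈ A) := by
      intro y z hz A hA
      simp only [hcell, Set.mem_iInter] at hz
      have := hz A hA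
      split at this
      · simp_all
      · simp_all
    have hcelleq : ∀ y z, z ∈ cell y → cell z = cell y := by
      intro y z hz
      simp only [hcell]
      apply Set.iInter₂_congr
      intro A hA
      exact if_congr (hiff y z hz A hA) rfl rfl
    -- cell y ⊆ A when y ∈ A, and disjoint from A when y ∉ A
    have hsub : ∀ y, ∀ A ∈ V, y ∈ A → cell y ⊆ A := by
      intro y A hA hy z hz
      exact (hiff y z hz A hA).2 hy
    have hsub' : ∀ y, ∀ A ∈ V, y ∉ A → cell y ⊆ Aᶜ := by
      intro y A hA hy z hz
      exact fun h => hy ((hiff y z hz A hA).1 h)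
    -- the finite set of cells
    set C : Finset (Set Y) := Finset.image cell Finset.univ with hC
    have hCm : ∀ c ∈ C, MeasurableSet[M] c := by
      intro c hc
      simp only [hC, Finset.mem_image] at hc
      obtain ⟨y, -, rfl⟩ := hc
      exact hcellm y
    have hCd : (C : Set (Set Y)).PairwiseDisjoint id := by
      intro c1 h1 c2 h2 hne
      simp only [hC, Finset.coe_image, Set.mem_image] at h1 h2
      obtain ⟨y1, -, rfl⟩ := h1
      obtain ⟨y2, -, rfl⟩ := h2
      rw [Function.onFun, Set.disjoint_left]
      intro z hz1 hz2
      exact hne ((hcelleq y1 z hz1) ▸ (hcelleq y2 z hz2))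
    -- representatives
    have hrepex : ∀ c ∈ C, ∃ y, cell y = c := by
      intro c hc
      simp only [hC, Finset.mem_image] at hc
      obtain ⟨y, -, rfl⟩ := hc
      exact ⟨y, rfl⟩
    set rep : Set Y → Y := fun c => if h : ∃ y, cell y = c then h.choose else Classical.arbitrary Y
      with hrep
    have hrepcell : ∀ c ∈ C, cell (rep c) = c := by
      intro c hc
      have h := hrepex c hc
      simp only [hrep, dif_pos h]
      exact h.choose_spec
    have hrepmem : ∀ c ∈ C, rep c ∈ c := by
      intro c hc
      have := hmem (rep c)
      rwa [hrepcell c hc] at this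
    -- total mass 1
    have hunion : (⋃ c ∈ C, c) = Set.univ := by
      apply Set.eq_univ_of_forall
      intro y
      exact Set.mem_biUnion (Finset.mem_image_of_mem cell (Finset.mem_univ y)) (hmem y)
    have htot : ∑ c ∈ C, mu' c = 1 := by
      rw [← finadd_biUnion_sum mu' h0 hadd C hCm hCd, hunion, huniv]
    -- decomposition of each A ∈ V
    have hdecomp : ∀ A ∈ V, ∑ c ∈ C, mu' c * (Set.indicator A (fun _ => (1:ℝ)) (rep c)) = mu' A := by
      intro A hA
      have hAeq : A = ⋃ c ∈ C.filter (fun c => rep c ∈ A), c := by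
        apply Set.Subset.antisymm
        · intro y hy
          have hcy : cell y ∈ C := Finset.mem_image_of_mem cell (Finset.mem_univ y)
          refine Set.mem_biUnion (Finset.mem_filter.2 ⟨hcy, ?_⟩) (hmem y)
          exact (hiff y _ (hrepmem _ hcy) A hA).2 hy
        · intro y hy
          simp only [Set.mem_iUnion] at hy
          obtain ⟨c, hc, hyc⟩ := hy
          have hc' := Finset.mem_filter.1 hc
          have : cell (rep c) ⊆ A := hsub (rep c) A hA hc'.2
          rw [hrepcell c hc'.1] at this
          exact this hyc
      have hsum : mu' A = ∑ c ∈ C.filter (fun c => rep c ∈ A), mu' c := by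
        conv_lhs => rw [hAeq]
        exact finadd_biUnion_sum mu' h0 hadd _
          (fun c hc => hCm c (Finset.mem_of_mem_filter c hc))
          (hCd.subset (by intro c hc; exact Finset.mem_coe.2 (Finset.mem_of_mem_filter c (Finset.mem_coe.1 hc))))
      rw [hsum, Finset.sum_filter]
      apply Finset.sum_congr rfl
      intro c hc
      by_cases h : rep c ∈ A <;> simp [h, Set.indicator_of_mem, Set.indicator_of_notMem]
    -- the grand sum
    set f : Y → ℝ := fun y => ∑ A ∈ V, st A * (Set.indicator A (fun _ => (1:ℝ)) y - mu A) with hf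
    have hS : ∑ c ∈ C, mu' c * f (rep c) = 0 := by
      have : ∑ c ∈ C, mu' c * f (rep c)
          = ∑ A ∈ V, st A * (mu' A - mu A) := by
        simp only [hf, Finset.mul_sum]
        rw [Finset.sum_comm]
        apply Finset.sum_congr rfl
        intro A hA
        have : ∀ c ∈ C, mu' c * (st A * (Set.indicator A (fun _ => (1:ℝ)) (rep c) - mu A))
            = st A * (mu' c * Set.indicator A (fun _ => (1:ℝ)) (rep c) - mu' c * mu A) := by
          intro c _; ring
        rw [Finset.sum_congr rfl this, ← Finset.mul_sum, Finset.sum_sub_distrib,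
          hdecomp A hA, ← Finset.sum_mul, htot, one_mul]
      rw [this]
      apply Finset.sum_eq_zero
      intro A hA
      rw [hext A (hVS hA)]
      ring
    -- but the sum is negative
    have hexpos : ∃ c ∈ C, 0 < mu' c := by
      by_contra h
      push_neg at h
      have : ∑ c ∈ C, mu' c ≤ 0 := Finset.sum_nonpos h
      linarith [htot]
    obtain ⟨c0, hc0, hc0pos⟩ := hexpos
    have hlt : ∑ c ∈ C, mu' c * f (rep c) < ∑ c ∈ C, (0:ℝ) := by
      apply Finset.sum_lt_sum
      · intro c hc
        exact mul_nonpos_of_nonneg_of_nonpos (hnn c (hCm c hc)) (le_of_lt (hneg (rep c)))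
      · exact ⟨c0, hc0, mul_neg_of_pos_of_neg hc0pos (hneg (rep c0))⟩
    simp only [Finset.sum_const, smul_zero] at hlt
    rw [hS] at hlt
    exact lt_irrefl 0 hlt
end

section
/- Let Y be a finite nonempty set, Σ ⊆ P(Y) a finite collection, and μ : Σ → [0,1]. Then μ is not Dutch Bookable if and only if μ lies in the convex hull of the valuations {V_y : y ∈ Y}, i.e., there exist weights λ_y ≥ 0 with Σ_y λ_y = 1 such that μ(A) = Σ_y λ_y · χ_A(y) for all A ∈ Σ. -/
/-!
A book with stakes `s` has payoff `s ⬝ (V_y - μ)` at `y`, so a Dutch Book is a linear functional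
`f` with `f V_y < f μ` for every `y`. If such an `f` exists, the open half-space `{f < f μ}`
contains every `V_y`, hence their convex hull, but not `μ`. Conversely, the convex hull of the
finitely many `V_y` is compact, so if `μ` lies outside it, Hahn–Banach separates `μ` from it by a
linear functional, and in coordinates that functional is a dot product with some stakes.
-/

open Set

section ConvexHull

variable {R E Y : Type*} [Field R] [LinearOrder R] [IsStrictOrderedRing R]
  [AddCommGroup E] [Module R E] [Fintype Y]

theorem convexHull_range_eq_image_stdSimplex (v : Y → E) :
    convexHull R (range v) = Fintype.linearCombination R v '' stdSimplex R Y := by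
  classical
  rw [← convexHull_rangle_single_eq_stdSimplex, LinearMap.image_convexHull, ← range_comp]
  congr 2
  funext y
  simp [Fintype.linearCombination_apply_single]

theorem mem_convexHull_range_iff_exists_sum_smul_eq (v : Y → E) (m : E) :
    m ∈ convexHull R (range v) ↔
      ∃ w : Y → R, (∀ y, 0 ≤ w y) ∧ ∑ y, w y = 1 ∧ ∑ y, w y • v y = m := by
  simp [convexHull_range_eq_image_stdSimplex, stdSimplex, Fintype.linearCombination_apply,
    and_assoc]

end ConvexHull

section Separation

variable {E Y : Type*} [AddCommGroup E] [Module ℝ E] [TopologicalSpace E]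
  [IsTopologicalAddGroup E] [ContinuousSMul ℝ E] [LocallyConvexSpace ℝ E] [T2Space E] [Finite Y]

theorem mem_convexHull_range_iff_not_exists_lt (v : Y → E) (m : E) :
    m ∈ convexHull ℝ (range v) ↔ ¬ ∃ f : StrongDual ℝ E, ∀ y, f (v y) < f m := by
  constructor
  · rintro hm ⟨f, hf⟩
    have hsub : convexHull ℝ (range v) ⊆ {x | f x < f m} :=
      convexHull_min (range_subset_iff.2 hf) (convex_halfSpace_lt f.isLinear _)
    exact lt_irrefl (f m) (hsub hm)
  · intro hsep
    by_contra hm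
    obtain ⟨f, u, hlt, hu⟩ := geometric_hahn_banach_closed_point (convex_convexHull ℝ _)
      ((finite_range v).isClosed_convexHull ℝ) hm
    exact hsep ⟨f, fun y => (hlt _ (subset_convexHull ℝ _ (mem_range_self y))).trans hu⟩

end Separation

theorem mem_convexHull_range_iff_not_exists_dotProduct_neg {κ Y : Type*} [Fintype κ] [Finite Y]
    (v : Y → κ → ℝ) (m : κ → ℝ) :
    m ∈ convexHull ℝ (range v) ↔ ¬ ∃ s : κ → ℝ, ∀ y, s ⬝ᵥ (v y - m) < 0 := by
  classical
  rw [mem_convexHull_range_iff_not_exists_lt]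
  refine not_congr ⟨fun ⟨f, hf⟩ => ⟨(dotProductEquiv ℝ κ).symm f.toLinearMap, fun y => ?_⟩,
    fun ⟨s, hs⟩ => ⟨LinearMap.toContinuousLinearMap (dotProductEquiv ℝ κ s), fun y => ?_⟩⟩
  · have hdot : ∀ x, (dotProductEquiv ℝ κ).symm f.toLinearMap ⬝ᵥ x = f x := fun x =>
      LinearMap.congr_fun ((dotProductEquiv ℝ κ).apply_symm_apply f.toLinearMap) x
    rw [dotProduct_sub, hdot, hdot]
    exact sub_neg.2 (hf y)
  · have := hs y
    rw [dotProduct_sub] at this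
    simpa using this

theorem exists_subset_sum_neg_iff {ι Y : Type*} (I : Finset ι) (g : Y → ι → ℝ) :
    (∃ (V : Finset ι) (st : ι → ℝ), V ⊆ I ∧ ∀ y, ∑ i ∈ V, st i * g y i < 0) ↔
      ∃ s : I → ℝ, ∀ y, ∑ i : I, s i * g y i < 0 := by
  classical
  constructor
  · rintro ⟨V, st, hVI, hV⟩
    refine ⟨fun i => if (i : ι) ∈ V then st i else 0, fun y => ?_⟩
    have hsum : ∑ i : I, (if (i : ι) ∈ V then st i else 0) * g y i = ∑ i ∈ V, st i * g y i := by
      rw [Finset.sum_coe_sort I (fun i => (if i ∈ V then st i else 0) * g y i)]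
      simp only [ite_mul, zero_mul, Finset.sum_ite_mem, Finset.inter_eq_right.2 hVI]
    exact hsum ▸ hV y
  · rintro ⟨s, hs⟩
    refine ⟨I, fun i => if h : i ∈ I then s ⟨i, h⟩ else 0, subset_rfl, fun y => ?_⟩
    rw [← Finset.sum_coe_sort I]
    simpa using hs y

namespace DutchBook

variable {Y : Type*}

noncomputable def valuation (Sigma : Finset (Set Y)) (y : Y) : Sigma → ℝ :=
  fun A => Set.indicator A (fun _ => 1) y

theorem mem_convexHull_valuation_iff [Fintype Y] (Sigma : Finset (Set Y)) (mu : Set Y → ℝ) :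
    (fun A : Sigma => mu A) ∈ convexHull ℝ (range (valuation Sigma)) ↔
      ∃ lam : Y → ℝ, (∀ y, 0 ≤ lam y) ∧ (∑ y, lam y = 1) ∧
        ∀ A ∈ Sigma, mu A = ∑ y, lam y * Set.indicator A (fun _ => (1 : ℝ)) y := by
  simp only [mem_convexHull_range_iff_exists_sum_smul_eq, funext_iff, Finset.sum_apply,
    Pi.smul_apply, smul_eq_mul, valuation, Subtype.forall, eq_comm]

end DutchBook

open DutchBook in
theorem not_dutch_bookable_iff_convex_general {Y : Type*} [Fintype Y]
    (Sigma : Finset (Set Y)) (mu : Set Y → ℝ) :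
    (¬ ∃ (V : Finset (Set Y)) (st : Set Y → ℝ), V ⊆ Sigma ∧
        ∀ y : Y, (∑ A ∈ V, st A * (Set.indicator A (fun _ => (1 : ℝ)) y - mu A)) < 0)
    ↔ ∃ lam : Y → ℝ, (∀ y, 0 ≤ lam y) ∧ (∑ y, lam y = 1) ∧
        ∀ A ∈ Sigma, mu A = ∑ y, lam y * Set.indicator A (fun _ => (1 : ℝ)) y := by
  rw [exists_subset_sum_neg_iff Sigma fun y A => Set.indicator A (fun _ => (1 : ℝ)) y - mu A,
    ← mem_convexHull_valuation_iff, mem_convexHull_range_iff_not_exists_dotProduct_neg]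
  simp only [dotProduct, valuation, Pi.sub_apply]

/-- **De Finetti's characterization of Dutch Bookability (finite case).** Let `Y` be
a finite nonempty set, `Σ` a finite collection of subsets of `Y`, and `μ : Σ → ℝ`.
Then `μ` is not Dutch Bookable (there are no finite `V ⊆ Σ` and stakes `s : V → ℝ`
making the payoff strictly negative at every `y ∈ Y`) if and only if `μ` lies in the
convex hull of the valuations `V_y = χ_{(·)}(y)`: there are weights `λ_y ≥ 0` with
`∑ λ_y = 1` such that `μ(A) = ∑_y λ_y · χ_A(y)` for every `A ∈ Σ`. -/
theorem not_dutch_bookable_iff_convex {Y : Type*} [Fintype Y] [Nonempty Y]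
    (Sigma : Finset (Set Y)) (mu : Set Y → ℝ) :
    (¬ ∃ (V : Finset (Set Y)) (st : Set Y → ℝ), V ⊆ Sigma ∧
        ∀ y : Y, (∑ A ∈ V, st A * (Set.indicator A (fun _ => (1 : ℝ)) y - mu A)) < 0)
    ↔ ∃ lam : Y → ℝ, (∀ y, 0 ≤ lam y) ∧ (∑ y, lam y = 1) ∧
        ∀ A ∈ Sigma, mu A = ∑ y, lam y * Set.indicator A (fun _ => (1 : ℝ)) y :=
  not_dutch_bookable_iff_convex_general Sigma mu
end

section
/- Let e be an empirical model with a WPS representation e† = (E†, Σ, μ) over sample space Y. For every point z in Z := Y \ ∪(D₁ ∪ D₂), there exists a global section s_X ∈ E(X) such that z ∈ Ē(s_X), where Ē is the event transfer map. -/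
/-- `Z := Y \ ∪(D₁ ∪ D₂)`: the points of the sample space avoiding all
"contradictory events" `Ē(s) ∩ Ē(s')` (`s ≠ s'` over a singleton) in `D₁` and all
"non-existent outcome" sets `Y \ ∪_{s ∈ E({x})} Ē(s)` in `D₂`. -/
def ZSet {X O Y : Type*} (Ebar : (U : Finset X) → Sec U O → Set Y) : Set Y :=
  {z | (∀ (x : X) (s s' : Sec ({x} : Finset X) O), s ≠ s' →
          ¬ (z ∈ Ebar {x} s ∧ z ∈ Ebar {x} s')) ∧
       (∀ x : X, ∃ s : Sec ({x} : Finset X) O, z ∈ Ebar {x} s)}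

/-- **Key lemma.** For a WPS representation whose event transfer map `Ē` is injective
and satisfies the gluing condition `Ē(s_U) = ⋂_{x ∈ U} Ē(s_U|_{x}) ≠ ∅`, every point
`z ∈ Z = Y \ ∪(D₁ ∪ D₂)` lies in `Ē(s_X)` for some global section `s_X ∈ E(X)`. -/
theorem mem_global_section_of_mem_Z {X O Y : Type*} [Fintype X] [DecidableEq X]
    (Ebar : (U : Finset X) → Sec U O → Set Y)
    (hinj : ∀ U : Finset X, Function.Injective (Ebar U))
    (hglue : ∀ (U : Finset X) (s : Sec U O),
      Ebar U s = ⋂ (x : X), ⋂ (hx : x ∈ U), Ebar {x} (singleSec x hx s))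
    (hne : ∀ (U : Finset X) (s : Sec U O), (Ebar U s).Nonempty) :
    ∀ z ∈ ZSet Ebar, ∃ sX : Sec (Finset.univ : Finset X) O,
      z ∈ Ebar Finset.univ sX := by
  intro z hz
  obtain ⟨-, hex⟩ := hz
  choose f hf using hex
  refine ⟨fun p => f p.1 ⟨p.1, Finset.mem_singleton_self _⟩, ?_⟩
  rw [hglue]
  refine Set.mem_iInter.2 fun x => Set.mem_iInter.2 fun hx => ?_
  have : singleSec x hx (fun p => f p.1 ⟨p.1, Finset.mem_singleton_self _⟩) = f x := by
    funext a
    have := a.2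
    simp only [Finset.mem_singleton] at this
    simp [singleSec]
    congr 1
    exact Subtype.ext this.symm
  rw [this]
  exact hf x
end

section
/- Let e be an empirical model with a WPS representation e† satisfying Weak Classicality, Empirical Consistency, and Mutual Exclusivity. If e is strongly contextual, then e† maximally violates subadditivity: there is a finite collection V of measure-zero events in Σ with ∪V = Y, hence μ(∪V) − Σ_{A∈V} μ(A) = 1. -/
open MeasureTheory


/-- The σ-algebra on `Y` generated by the representations of singleton events over
measurements in a context `C` (for finitely many generators this coincides with the
generated algebra `Σ_C`). -/
def genCtx {X O Y : Type*} (Ebar : (U : Finset X) → Sec U O → Set Y)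
    (C : Finset X) : MeasurableSpace Y :=
  MeasurableSpace.generateFrom
    {S | ∃ x ∈ C, ∃ s : Sec ({x} : Finset X) O, S = Ebar {x} s}

/-- The set `Σ` of WPS events: the union of the algebras `Σ_C` over contexts `C ∈ M`. -/
def SigmaOf {X O Y : Type*} (M : Finset (Finset X))
    (Ebar : (U : Finset X) → Sec U O → Set Y) : Set (Set Y) :=
  {A | ∃ C ∈ M, MeasurableSet[genCtx Ebar C] A}

/-- A WPS representation `e† = (E†, Σ, μ)` of an empirical model `e`: an injective
event transfer map satisfying the gluing condition and nonemptiness, with a set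
function `μ` satisfying Weak Classicality (WC), Empirical Consistency (EC) and
Mutual Exclusivity (ME). -/
structure WPSRep {X O : Type*} [Fintype X] [DecidableEq X] [Fintype O] [DecidableEq O]
    (M : Finset (Finset X)) (e : (C : Finset X) → Sec C O → ℝ) (Y : Type*) where
  Ebar : (U : Finset X) → Sec U O → Set Y
  mu : Set Y → ℝ
  inj : ∀ U : Finset X, Function.Injective (Ebar U)
  glue : ∀ (U : Finset X) (s : Sec U O),
    Ebar U s = ⋂ (x : X), ⋂ (hx : x ∈ U), Ebar {x} (singleSec x hx s)
  nonempty : ∀ (U : Finset X) (s : Sec U O), (Ebar U s).Nonempty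
  wc_univ : mu Set.univ = 1
  wc_nonneg : ∀ C ∈ M, ∀ A : Set Y, MeasurableSet[genCtx Ebar C] A → 0 ≤ mu A
  wc_le_one : ∀ C ∈ M, ∀ A : Set Y, MeasurableSet[genCtx Ebar C] A → mu A ≤ 1
  wc_add : ∀ C ∈ M, ∀ A B : Set Y, MeasurableSet[genCtx Ebar C] A →
    MeasurableSet[genCtx Ebar C] B → Disjoint A B → mu (A ∪ B) = mu A + mu B
  ec : ∀ C ∈ M, ∀ (U : Finset X) (hU : U ⊆ C) (s : Sec U O),
    mu (Ebar U s) = margin e C U hU s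
  me : ∀ (U : Finset X) (s s' : Sec U O), s ≠ s' → mu (Ebar U s ∩ Ebar U s') = 0

/-- A combinatorial WPS representation: additionally satisfies Strong Mutual
Exclusivity and Exhaustiveness. -/
structure ComboWPSRep {X O : Type*} [Fintype X] [DecidableEq X] [Fintype O] [DecidableEq O]
    (M : Finset (Finset X)) (e : (C : Finset X) → Sec C O → ℝ) (Y : Type*)
    extends WPSRep M e Y where
  sme : ∀ (U : Finset X) (s s' : Sec U O), s ≠ s' → Ebar U s ∩ Ebar U s' = ∅
  exh : ∀ U : Finset X, (⋃ s : Sec U O, Ebar U s) = Set.univ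

/-- The collection `V_M` of representations of events over maximal contexts. -/
def VMSet {X O Y : Type*} (M : Finset (Finset X))
    (Ebar : (U : Finset X) → Sec U O → Set Y) : Set (Set Y) :=
  {A | ∃ C ∈ M, ∃ s : Sec C O, A = Ebar C s}

/-- A monotonic extension `(Y, Σ', μ')` of a WPS `(Y, Σ, μ)`: `Σ'` contains the
algebra generated by `Σ`, `μ'` restricts to `μ` on `Σ`, is monotone, and takes
values in `[0,1]`. -/
structure MonExt {Y : Type*} (Sigma : Set (Set Y)) (mu : Set Y → ℝ)
    (Sigma' : Set (Set Y)) (mu' : Set Y → ℝ) : Prop where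
  sub : Sigma ⊆ Sigma'
  univ_mem : Set.univ ∈ Sigma'
  compl_mem : ∀ A ∈ Sigma', Aᶜ ∈ Sigma'
  union_mem : ∀ A ∈ Sigma', ∀ B ∈ Sigma', A ∪ B ∈ Sigma'
  restricts : ∀ A ∈ Sigma, mu' A = mu A
  mono : ∀ A ∈ Sigma', ∀ B ∈ Sigma', A ⊆ B → mu' A ≤ mu' B
  nonneg : ∀ A ∈ Sigma', 0 ≤ mu' A
  le_one : ∀ A ∈ Sigma', mu' A ≤ 1



section FinAdd
variable {Y : Type*} {m : MeasurableSpace Y} {μ : Set Y → ℝ}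
  (hadd : ∀ A B : Set Y, MeasurableSet A → MeasurableSet B → Disjoint A B → μ (A ∪ B) = μ A + μ B)
  (hnn : ∀ A : Set Y, MeasurableSet A → 0 ≤ μ A)

include hadd

lemma fa_empty : μ ∅ = 0 := by
  have := hadd ∅ ∅ .empty .empty (by simp)
  simp at this; linarith

lemma fa_union_eq {A B : Set Y} (hA : MeasurableSet A) (hB : MeasurableSet B) :
    μ (A ∪ B) = μ (A \ B) + μ B := by
  rw [← hadd _ _ (hA.diff hB) hB disjoint_sdiff_self_left, Set.diff_union_self]

lemma fa_diff {A B : Set Y} (hA : MeasurableSet A) (hB : MeasurableSet B) :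
    μ (A \ B) = μ A - μ (A ∩ B) := by
  have h1 : μ (A \ B ∪ A ∩ B) = μ (A \ B) + μ (A ∩ B) := by
    refine hadd _ _ (hA.diff hB) (hA.inter hB) (Set.disjoint_left.2 ?_)
    intro x hx hx'
    exact hx.2 hx'.2
  rw [Set.diff_union_inter] at h1
  linarith

include hnn

lemma fa_mono {A B : Set Y} (hA : MeasurableSet A) (hB : MeasurableSet B) (hAB : A ⊆ B) :
    μ A ≤ μ B := by
  have h1 : μ (A ∪ B) = μ A + μ (B \ A) := by
    rw [Set.union_comm, fa_union_eq hadd hB hA]; ring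
  rw [Set.union_eq_right.2 hAB] at h1
  have := hnn (B \ A) (hB.diff hA)
  linarith

lemma fa_subadd {ι : Type*} {A : ι → Set Y} (hA : ∀ i, MeasurableSet (A i)) (s : Finset ι) :
    μ (⋃ i ∈ s, A i) ≤ ∑ i ∈ s, μ (A i) := by
  classical
  induction s using Finset.induction with
  | empty => simp [fa_empty hadd]
  | @insert a s ha ih =>
    rw [Finset.set_biUnion_insert, Finset.sum_insert ha]
    have hU : MeasurableSet (⋃ i ∈ s, A i) := s.measurableSet_biUnion (fun i _ => hA i)
    rw [fa_union_eq hadd (hA a) hU]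
    have h1 : μ (A a \ ⋃ i ∈ s, A i) ≤ μ (A a) :=
      fa_mono hadd hnn ((hA a).diff hU) (hA a) Set.diff_subset
    linarith

lemma fa_superadd {ι : Type*} {A : ι → Set Y} (hA : ∀ i, MeasurableSet (A i)) (s : Finset ι)
    (hnull : ∀ i ∈ s, ∀ j ∈ s, i ≠ j → μ (A i ∩ A j) = 0) :
    ∑ i ∈ s, μ (A i) ≤ μ (⋃ i ∈ s, A i) := by
  classical
  induction s using Finset.induction with
  | empty => simp [fa_empty hadd]
  | @insert a s ha ih =>
    rw [Finset.set_biUnion_insert, Finset.sum_insert ha]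
    have hU : MeasurableSet (⋃ i ∈ s, A i) := s.measurableSet_biUnion (fun i _ => hA i)
    rw [fa_union_eq hadd (hA a) hU, fa_diff hadd (hA a) hU]
    have hinter : A a ∩ ⋃ i ∈ s, A i = ⋃ i ∈ s, (A a ∩ A i) := by
      simp [Set.inter_iUnion]
    have h2 : μ (A a ∩ ⋃ i ∈ s, A i) ≤ 0 := by
      rw [hinter]
      calc μ (⋃ i ∈ s, (A a ∩ A i)) ≤ ∑ i ∈ s, μ (A a ∩ A i) :=
            fa_subadd hadd hnn (fun i => (hA a).inter (hA i)) s
        _ = 0 := Finset.sum_eq_zero fun i hi =>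
            hnull a (Finset.mem_insert_self a s) i (Finset.mem_insert_of_mem hi)
              (fun hh => ha (hh ▸ hi))
    have h3 := ih (fun i hi j hj hij =>
      hnull i (Finset.mem_insert_of_mem hi) j (Finset.mem_insert_of_mem hj) hij)
    linarith

end FinAdd

/-- **Theorem 1.1.** If the empirical model `e` is strongly contextual, then any of
its WPS representations `e†` maximally violates subadditivity: there is a finite
collection `V` of measure-zero events in `Σ` covering `Y`, so that
`μ(∪V) − ∑_{A ∈ V} μ(A) = 1`. -/
theorem strongly_contextual_max_violates_subadditivity {X O Y : Type*}
    [Fintype X] [DecidableEq X] [Fintype O] [DecidableEq O]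
    (M : Finset (Finset X)) (e : (C : Finset X) → Sec C O → ℝ)
    (hmodel : IsEmpiricalModel M e)
    (W : WPSRep M e Y)
    (h : StronglyContextual M e) :
    ∃ V : Finset (Set Y), ↑V ⊆ SigmaOf M W.Ebar ∧ (∀ A ∈ V, W.mu A = 0) ∧
      ⋃₀ (V : Set (Set Y)) = Set.univ ∧
      W.mu (⋃₀ (V : Set (Set Y))) - ∑ A ∈ V, W.mu A = 1 := by
  classical
  obtain ⟨hcovX, hprob, -⟩ := hmodel
  choose Cx hCxM hxCx using hcovX
  -- every section over a singleton is constant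
  have hconst : ∀ (x : X) (s : Sec ({x} : Finset X) O),
      s = fun _ => s ⟨x, Finset.mem_singleton_self x⟩ := by
    intro x s
    funext y
    congr 1
    exact Subtype.ext (Finset.mem_singleton.mp y.2)
  -- sum of margins over a singleton is 1
  have hmargsum : ∀ (C : Finset X), C ∈ M → ∀ (x : X) (hx : x ∈ C),
      ∑ s : Sec ({x} : Finset X) O,
        margin e C {x} (Finset.singleton_subset_iff.2 hx) s = 1 := by
    intro C hC x hx
    unfold margin
    rw [Finset.sum_fiberwise Finset.univ (resSec (Finset.singleton_subset_iff.2 hx)) (e C)]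
    exact (hprob C hC).2
  have hmeas1 : ∀ (C : Finset X) (x : X), x ∈ C → ∀ s : Sec ({x} : Finset X) O,
      MeasurableSet[genCtx W.Ebar C] (W.Ebar {x} s) :=
    fun C x hx s => MeasurableSpace.measurableSet_generateFrom ⟨x, hx, s, rfl⟩
  set N : X → Set Y := fun x => (⋃ s : Sec ({x} : Finset X) O, W.Ebar {x} s)ᶜ with hNdef
  have hNU : ∀ x : X, MeasurableSet[genCtx W.Ebar (Cx x)]
      (⋃ s : Sec ({x} : Finset X) O, W.Ebar {x} s) :=
    fun x => MeasurableSet.iUnion (fun s => hmeas1 _ x (hxCx x) s)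
  have hNmeas : ∀ x : X, MeasurableSet[genCtx W.Ebar (Cx x)] (N x) := fun x => (hNU x).compl
  have hNnull : ∀ x : X, W.mu (N x) = 0 := by
    intro x
    have hC := hCxM x
    have hadd := W.wc_add (Cx x) hC
    have hnn := W.wc_nonneg (Cx x) hC
    have hx := hxCx x
    have hsub : ({x} : Finset X) ⊆ Cx x := Finset.singleton_subset_iff.2 hx
    have h1 : (1:ℝ) ≤ W.mu (⋃ s ∈ (Finset.univ : Finset (Sec ({x} : Finset X) O)),
        W.Ebar {x} s) := by
      have hsup := fa_superadd (m := genCtx W.Ebar (Cx x)) hadd hnn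
        (fun s => hmeas1 _ x hx s) Finset.univ
        (fun s _ s' _ hss => W.me {x} s s' hss)
      calc (1:ℝ) = ∑ s : Sec ({x} : Finset X) O, W.mu (W.Ebar {x} s) := by
            rw [← hmargsum (Cx x) hC x hx]
            exact (Finset.sum_congr rfl fun s _ => W.ec (Cx x) hC {x} hsub s).symm
        _ ≤ _ := hsup
    have hUeq : (⋃ s ∈ (Finset.univ : Finset (Sec ({x} : Finset X) O)), W.Ebar {x} s)
        = ⋃ s : Sec ({x} : Finset X) O, W.Ebar {x} s := by simp
    rw [hUeq] at h1
    have h2 := W.wc_le_one (Cx x) hC _ (hNU x)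
    have h3 : W.mu ((⋃ s : Sec ({x} : Finset X) O, W.Ebar {x} s) ∪ N x)
        = W.mu (⋃ s : Sec ({x} : Finset X) O, W.Ebar {x} s) + W.mu (N x) :=
      hadd _ _ (hNU x) (hNmeas x) disjoint_compl_right
    rw [show (⋃ s : Sec ({x} : Finset X) O, W.Ebar {x} s) ∪ N x = Set.univ from
      Set.union_compl_self _, W.wc_univ] at h3
    linarith
  have hmeasC : ∀ (C : Finset X), C ∈ M → ∀ t : Sec C O,
      MeasurableSet[genCtx W.Ebar C] (W.Ebar C t) := by
    intro C hC t
    rw [W.glue C t]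
    exact MeasurableSet.iInter fun x => MeasurableSet.iInter fun hx => hmeas1 C x hx _
  have hmuC : ∀ (C : Finset X), C ∈ M → ∀ t : Sec C O, W.mu (W.Ebar C t) = e C t := by
    intro C hC t
    rw [W.ec C hC C (Finset.Subset.refl C) t]
    unfold margin
    have hres : ∀ t' : Sec C O, resSec (Finset.Subset.refl C) t' = t' := fun _ => rfl
    simp only [hres]
    rw [Finset.filter_eq', if_pos (Finset.mem_univ t), Finset.sum_singleton]
  -- the cover
  let P := Σ C : {C : Finset X // C ∈ M}, Sec (C.1 : Finset X) O
  let V1 : Finset (Set Y) := Finset.univ.image N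
  let V2 : Finset (Set Y) :=
    (Finset.univ.filter (fun p : P => e p.1.1 p.2 = 0)).image (fun p => W.Ebar p.1.1 p.2)
  have hnull : ∀ A ∈ V1 ∪ V2, W.mu A = 0 := by
    intro A hA
    rcases Finset.mem_union.mp hA with hA | hA
    · obtain ⟨x, -, rfl⟩ := Finset.mem_image.mp hA
      exact hNnull x
    · obtain ⟨p, hp, rfl⟩ := Finset.mem_image.mp hA
      have hp0 := (Finset.mem_filter.mp hp).2
      rw [hmuC p.1.1 p.1.2 p.2, hp0]
  have hcover : ⋃₀ ((V1 ∪ V2 : Finset (Set Y)) : Set (Set Y)) = Set.univ := by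
    apply Set.eq_univ_of_forall
    intro z
    by_cases hz : ∃ x : X, z ∈ N x
    · obtain ⟨x, hx⟩ := hz
      exact ⟨N x, Finset.mem_coe.mpr (Finset.mem_union_left _
        (Finset.mem_image.mpr ⟨x, Finset.mem_univ x, rfl⟩)), hx⟩
    · push_neg at hz
      have hz' : ∀ x : X, ∃ s : Sec ({x} : Finset X) O, z ∈ W.Ebar {x} s := by
        intro x
        have hzx := hz x
        rw [hNdef] at hzx
        simpa [Set.mem_iUnion] using hzx
      choose sx hsx using hz'
      set g : X → O := fun x => sx x ⟨x, Finset.mem_singleton_self x⟩ with hg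
      have hng : ¬ ConsistentGlobal M e g := fun hcg => h ⟨g, hcg⟩
      unfold ConsistentGlobal at hng
      push_neg at hng
      obtain ⟨C, hC, hCe⟩ := hng
      refine ⟨W.Ebar C (restrictGlobal g C), ?_, ?_⟩
      · refine Finset.mem_coe.mpr (Finset.mem_union_right _ (Finset.mem_image.mpr
          ⟨⟨⟨C, hC⟩, restrictGlobal g C⟩, Finset.mem_filter.mpr ⟨Finset.mem_univ _, hCe⟩, rfl⟩))
      · rw [W.glue]
        refine Set.mem_iInter.2 fun x => Set.mem_iInter.2 fun hxC => ?_
        have hss : singleSec x hxC (restrictGlobal g C) = sx x := (hconst x (sx x)).symm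
        rw [hss]
        exact hsx x
  refine ⟨V1 ∪ V2, ?_, hnull, hcover, ?_⟩
  · intro A hA
    rcases Finset.mem_union.mp (Finset.mem_coe.mp hA) with hA | hA
    · obtain ⟨x, -, rfl⟩ := Finset.mem_image.mp hA
      exact ⟨Cx x, hCxM x, hNmeas x⟩
    · obtain ⟨p, -, rfl⟩ := Finset.mem_image.mp hA
      exact ⟨p.1.1, p.1.2, hmeasC p.1.1 p.1.2 p.2⟩
  · rw [hcover, W.wc_univ, Finset.sum_eq_zero hnull]
    norm_num
end

section
/- Let e be an empirical model with a WPS representation e†. If e is logically contextual, then e† violates subadditivity: there is a finite collection V ⊆ Σ with ∪V = Y and Σ_{A∈V} μ(A) < μ(Y) = 1. -/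
open MeasureTheory


section AuxFinAdd

variable {Y : Type*} {ms : MeasurableSpace Y} {m : Set Y → ℝ}

lemma aux_empty
    (hadd : ∀ A B : Set Y, MeasurableSet[ms] A → MeasurableSet[ms] B → Disjoint A B →
      m (A ∪ B) = m A + m B) : m (∅ : Set Y) = 0 := by
  have h := hadd ∅ ∅ MeasurableSet.empty MeasurableSet.empty (by simp)
  simp only [Set.union_empty] at h
  linarith

lemma aux_mono (h0 : ∀ A : Set Y, MeasurableSet[ms] A → 0 ≤ m A)
    (hadd : ∀ A B : Set Y, MeasurableSet[ms] A → MeasurableSet[ms] B → Disjoint A B →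
      m (A ∪ B) = m A + m B)
    {A B : Set Y} (hA : MeasurableSet[ms] A) (hB : MeasurableSet[ms] B)
    (hsub : A ⊆ B) : m A ≤ m B := by
  have h1 := hadd A (B \ A) hA (hB.diff hA) disjoint_sdiff_self_right
  rw [Set.union_diff_cancel hsub] at h1
  have h2 := h0 (B \ A) (hB.diff hA)
  linarith

lemma aux_subadd (h0 : ∀ A : Set Y, MeasurableSet[ms] A → 0 ≤ m A)
    (hadd : ∀ A B : Set Y, MeasurableSet[ms] A → MeasurableSet[ms] B → Disjoint A B →
      m (A ∪ B) = m A + m B)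
    {A B : Set Y} (hA : MeasurableSet[ms] A) (hB : MeasurableSet[ms] B) :
    m (A ∪ B) ≤ m A + m B := by
  have h1 := hadd A (B \ A) hA (hB.diff hA) disjoint_sdiff_self_right
  rw [Set.union_diff_self] at h1
  have h2 := aux_mono h0 hadd (hB.diff hA) hB Set.diff_subset
  linarith

lemma aux_null_biUnion {ι : Type*}
    (h0 : ∀ A : Set Y, MeasurableSet[ms] A → 0 ≤ m A)
    (hadd : ∀ A B : Set Y, MeasurableSet[ms] A → MeasurableSet[ms] B → Disjoint A B →
      m (A ∪ B) = m A + m B)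
    (s : Finset ι) (E : ι → Set Y)
    (hm : ∀ i ∈ s, MeasurableSet[ms] (E i)) (hn : ∀ i ∈ s, m (E i) = 0) :
    m (⋃ i ∈ s, E i) = 0 := by
  classical
  induction s using Finset.induction_on with
  | empty => simpa using aux_empty hadd
  | @insert a s ha IH =>
    rw [Finset.set_biUnion_insert]
    have hma : MeasurableSet[ms] (E a) := hm a (Finset.mem_insert_self a s)
    have hmU : MeasurableSet[ms] (⋃ i ∈ s, E i) :=
      MeasurableSet.biUnion s.countable_toSet
        (fun i hi => hm i (Finset.mem_insert_of_mem hi))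
    have hle := aux_subadd h0 hadd hma hmU
    have hge := h0 _ (hma.union hmU)
    have hIH := IH (fun i hi => hm i (Finset.mem_insert_of_mem hi))
      (fun i hi => hn i (Finset.mem_insert_of_mem hi))
    have hna := hn a (Finset.mem_insert_self a s)
    linarith

lemma aux_add_of_null {ι : Type*}
    (h0 : ∀ A : Set Y, MeasurableSet[ms] A → 0 ≤ m A)
    (hadd : ∀ A B : Set Y, MeasurableSet[ms] A → MeasurableSet[ms] B → Disjoint A B →
      m (A ∪ B) = m A + m B)
    (s : Finset ι) (E : ι → Set Y)
    (hm : ∀ i ∈ s, MeasurableSet[ms] (E i))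
    (hn : ∀ i ∈ s, ∀ j ∈ s, i ≠ j → m (E i ∩ E j) = 0) :
    m (⋃ i ∈ s, E i) = ∑ i ∈ s, m (E i) := by
  classical
  induction s using Finset.induction_on with
  | empty => simpa using aux_empty hadd
  | @insert a s ha IH =>
    rw [Finset.set_biUnion_insert, Finset.sum_insert ha]
    have hma : MeasurableSet[ms] (E a) := hm a (Finset.mem_insert_self a s)
    have hmU : MeasurableSet[ms] (⋃ i ∈ s, E i) :=
      MeasurableSet.biUnion s.countable_toSet
        (fun i hi => hm i (Finset.mem_insert_of_mem hi))
    have h1 : m (E a ∪ ⋃ i ∈ s, E i) = m (E a) + m ((⋃ i ∈ s, E i) \ E a) := by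
      have := hadd (E a) ((⋃ i ∈ s, E i) \ E a) hma (hmU.diff hma) disjoint_sdiff_self_right
      rwa [Set.union_diff_self] at this
    have h2 : m (⋃ i ∈ s, E i) =
        m ((⋃ i ∈ s, E i) ∩ E a) + m ((⋃ i ∈ s, E i) \ E a) := by
      have := hadd ((⋃ i ∈ s, E i) ∩ E a) ((⋃ i ∈ s, E i) \ E a)
        (hmU.inter hma) (hmU.diff hma)
        (Set.disjoint_left.mpr (fun z hz1 hz2 => hz2.2 hz1.2))
      rwa [Set.inter_union_diff] at this
    have h3 : m ((⋃ i ∈ s, E i) ∩ E a) = 0 := by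
      have heq : (⋃ i ∈ s, E i) ∩ E a = ⋃ i ∈ s, (E i ∩ E a) := by
        ext z; simp only [Set.mem_inter_iff, Set.mem_iUnion]; tauto
      rw [heq]
      refine aux_null_biUnion h0 hadd s _ ?_ ?_
      · exact fun i hi => (hm i (Finset.mem_insert_of_mem hi)).inter hma
      · intro i hi
        exact hn i (Finset.mem_insert_of_mem hi) a (Finset.mem_insert_self a s)
          (fun hia => ha (hia ▸ hi))
    have hIH := IH (fun i hi => hm i (Finset.mem_insert_of_mem hi))
      (fun i hi j hj hij =>
        hn i (Finset.mem_insert_of_mem hi) j (Finset.mem_insert_of_mem hj) hij)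
    linarith

end AuxFinAdd

lemma margin_self {X O : Type*} [Fintype X] [DecidableEq X] [Fintype O] [DecidableEq O]
    (e : (C : Finset X) → Sec C O → ℝ) (C : Finset X) (hC : C ⊆ C) (u : Sec C O) :
    margin e C C hC u = e C u := by
  unfold margin
  have hres : ∀ v : Sec C O, resSec hC v = v := fun v => rfl
  have hfilter : (Finset.univ.filter fun v : Sec C O => resSec hC v = u) = {u} := by
    ext v; simp [hres v]
  rw [hfilter, Finset.sum_singleton]

lemma genCtx_basic {X O Y : Type*} (Ebar : (U : Finset X) → Sec U O → Set Y)
    {C : Finset X} {x : X} (hx : x ∈ C) (s : Sec ({x} : Finset X) O) :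
    MeasurableSet[genCtx Ebar C] (Ebar {x} s) :=
  MeasurableSpace.measurableSet_generateFrom ⟨x, hx, s, rfl⟩

lemma genCtx_meas_ebar {X O Y : Type*} [Fintype X]
    (Ebar : (U : Finset X) → Sec U O → Set Y)
    (glue : ∀ (U : Finset X) (s : Sec U O),
      Ebar U s = ⋂ (x : X), ⋂ (hx : x ∈ U), Ebar {x} (singleSec x hx s))
    {C U : Finset X} (hU : U ⊆ C) (u : Sec U O) :
    MeasurableSet[genCtx Ebar C] (Ebar U u) := by
  rw [glue U u]
  exact MeasurableSet.iInter fun x => MeasurableSet.iInter fun hx =>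
    genCtx_basic Ebar (hU hx) _

/-- **Theorem 1.2.** If the empirical model `e` is logically contextual, then any of
its WPS representations `e†` violates subadditivity: there is a finite collection
`V ⊆ Σ` with `∪V = Y` and `∑_{A ∈ V} μ(A) < μ(Y) = 1`. -/
theorem logically_contextual_violates_subadditivity {X O Y : Type*}
    [Fintype X] [DecidableEq X] [Fintype O] [DecidableEq O]
    (M : Finset (Finset X)) (e : (C : Finset X) → Sec C O → ℝ)
    (hmodel : IsEmpiricalModel M e)
    (W : WPSRep M e Y)
    (h : LogicallyContextual M e) :
    ∃ V : Finset (Set Y), ↑V ⊆ SigmaOf M W.Ebar ∧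
      ⋃₀ (V : Set (Set Y)) = Set.univ ∧
      (∑ A ∈ V, W.mu A) < W.mu Set.univ ∧ W.mu Set.univ = 1 := by
  classical
  obtain ⟨C, hC, t, htne, hext⟩ := h
  obtain ⟨hcov, hprob, -⟩ := hmodel
  choose Cx hCxM hxCx using hcov
  -- the union of all singleton events over x
  set A : X → Set Y := fun x => ⋃ o : O, W.Ebar {x} (fun _ => o) with hA
  set V1 : Finset (Set Y) := Finset.univ.image (fun x : X => (A x)ᶜ) with hV1
  set V3 : Finset (Set Y) :=
    M.biUnion (fun C' => (Finset.univ.filter fun u : Sec C' O => e C' u = 0).image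
      (W.Ebar C')) with hV3
  set V4 : Finset (Set Y) :=
    (Finset.univ.filter fun u : Sec C O => u ≠ t).image (W.Ebar C) with hV4
  have hmeasA : ∀ x : X, MeasurableSet[genCtx W.Ebar (Cx x)] (A x) :=
    fun x => MeasurableSet.iUnion fun o => genCtx_basic W.Ebar (hxCx x) _
  -- measure of complements of A x is zero
  have hmuA1 : ∀ x : X, W.mu (A x) = 1 := by
    intro x
    have hsx : ({x} : Finset X) ⊆ Cx x := Finset.singleton_subset_iff.mpr (hxCx x)
    have hun : (⋃ o ∈ (Finset.univ : Finset O), W.Ebar {x} (fun _ => o)) = A x := by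
      ext z; simp [hA]
    have hadd := aux_add_of_null (W.wc_nonneg (Cx x) (hCxM x)) (W.wc_add (Cx x) (hCxM x))
      Finset.univ (fun o : O => W.Ebar {x} (fun _ => o))
      (fun o _ => genCtx_basic W.Ebar (hxCx x) _)
      (fun o _ o' _ hne => W.me {x} _ _
        (fun hq => hne (congrFun hq ⟨x, Finset.mem_singleton_self x⟩)))
    rw [hun] at hadd
    rw [hadd]
    have hec : ∀ o : O, W.mu (W.Ebar {x} (fun _ => o)) =
        margin e (Cx x) {x} hsx (fun _ => o) :=
      fun o => W.ec (Cx x) (hCxM x) {x} hsx _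
    calc ∑ o : O, W.mu (W.Ebar {x} (fun _ => o))
        = ∑ o : O, ∑ u ∈ Finset.univ.filter
            (fun u : Sec (Cx x) O => u ⟨x, hxCx x⟩ = o), e (Cx x) u := by
          refine Finset.sum_congr rfl fun o _ => ?_
          rw [hec o]
          unfold margin
          refine Finset.sum_congr ?_ (fun _ _ => rfl)
          ext u
          simp only [Finset.mem_filter, Finset.mem_univ, true_and]
          constructor
          · intro hres
            exact congrFun hres ⟨x, Finset.mem_singleton_self x⟩
          · intro hval
            funext z
            obtain ⟨v, hv⟩ := z
            have hvx : v = x := Finset.mem_singleton.mp hv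
            subst hvx
            exact hval
      _ = ∑ u : Sec (Cx x) O, e (Cx x) u :=
          Finset.sum_fiberwise_of_maps_to (fun u _ => Finset.mem_univ _) _
      _ = 1 := (hprob (Cx x) (hCxM x)).2
  have hmuV1 : ∀ B ∈ V1, W.mu B = 0 := by
    intro B hB
    obtain ⟨x, -, rfl⟩ := Finset.mem_image.mp hB
    have h1 := W.wc_add (Cx x) (hCxM x) (A x) (A x)ᶜ (hmeasA x) (hmeasA x).compl
      disjoint_compl_right
    rw [Set.union_compl_self, W.wc_univ, hmuA1 x] at h1
    linarith
  have hmuV3 : ∀ B ∈ V3, W.mu B = 0 := by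
    intro B hB
    obtain ⟨C', hC', hB'⟩ := Finset.mem_biUnion.mp hB
    obtain ⟨u, hu, rfl⟩ := Finset.mem_image.mp hB'
    have hu0 : e C' u = 0 := (Finset.mem_filter.mp hu).2
    rw [W.ec C' hC' C' (subset_refl C') u, margin_self e C' (subset_refl C') u, hu0]
  refine ⟨(V1 ∪ V3) ∪ V4, ?_, ?_, ?_, W.wc_univ⟩
  · -- subset of SigmaOf
    intro B hB
    rcases Finset.mem_union.mp hB with hB | hB
    · rcases Finset.mem_union.mp hB with hB | hB
      · obtain ⟨x, -, rfl⟩ := Finset.mem_image.mp hB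
        exact ⟨Cx x, hCxM x, (hmeasA x).compl⟩
      · obtain ⟨C', hC', hB'⟩ := Finset.mem_biUnion.mp hB
        obtain ⟨u, -, rfl⟩ := Finset.mem_image.mp hB'
        exact ⟨C', hC', genCtx_meas_ebar W.Ebar W.glue (subset_refl C') u⟩
    · obtain ⟨u, -, rfl⟩ := Finset.mem_image.mp hB
      exact ⟨C, hC, genCtx_meas_ebar W.Ebar W.glue (subset_refl C) u⟩
  · -- covering
    ext y
    simp only [Set.mem_univ, iff_true, Set.mem_sUnion, Finset.mem_coe]
    by_cases hH : ∀ x : X, ∃ o : O, y ∈ W.Ebar {x} (fun _ => o)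
    · choose f hf using hH
      have key : ∀ U : Finset X, y ∈ W.Ebar U (restrictGlobal f U) := by
        intro U
        rw [W.glue]
        refine Set.mem_iInter.mpr fun x => Set.mem_iInter.mpr fun hx => ?_
        exact hf x
      by_cases hft : restrictGlobal f C = t
      · have hncons : ¬ ConsistentGlobal M e f := fun hcons => hext ⟨f, hft, hcons⟩
        unfold ConsistentGlobal at hncons
        push_neg at hncons
        obtain ⟨C', hC', hz⟩ := hncons
        refine ⟨W.Ebar C' (restrictGlobal f C'), ?_, key C'⟩
        refine Finset.mem_union.mpr (Or.inl (Finset.mem_union.mpr (Or.inr ?_)))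
        exact Finset.mem_biUnion.mpr ⟨C', hC', Finset.mem_image.mpr
          ⟨restrictGlobal f C', Finset.mem_filter.mpr ⟨Finset.mem_univ _, hz⟩, rfl⟩⟩
      · refine ⟨W.Ebar C (restrictGlobal f C), ?_, key C⟩
        refine Finset.mem_union.mpr (Or.inr ?_)
        exact Finset.mem_image.mpr
          ⟨restrictGlobal f C, Finset.mem_filter.mpr ⟨Finset.mem_univ _, hft⟩, rfl⟩
    · push_neg at hH
      obtain ⟨x, hx⟩ := hH
      refine ⟨(A x)ᶜ, ?_, ?_⟩
      · exact Finset.mem_union.mpr (Or.inl (Finset.mem_union.mpr (Or.inl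
          (Finset.mem_image.mpr ⟨x, Finset.mem_univ x, rfl⟩))))
      · simp only [hA, Set.mem_compl_iff, Set.mem_iUnion, not_exists]
        exact hx
  · -- sum < mu univ
    have hT0 : ∑ B ∈ V1 ∪ V3, W.mu B = 0 :=
      Finset.sum_eq_zero fun B hB => by
        rcases Finset.mem_union.mp hB with h' | h'
        · exact hmuV1 B h'
        · exact hmuV3 B h'
    have hnn4 : ∀ B ∈ V4, 0 ≤ W.mu B := by
      intro B hB
      obtain ⟨u, -, rfl⟩ := Finset.mem_image.mp hB
      exact W.wc_nonneg C hC _ (genCtx_meas_ebar W.Ebar W.glue (subset_refl C) u)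
    have hsum4 : ∑ B ∈ V4, W.mu B = 1 - e C t := by
      rw [hV4, Finset.sum_image (fun u _ v _ huv => W.inj C huv)]
      have : ∀ u ∈ Finset.univ.filter (fun u : Sec C O => u ≠ t),
          W.mu (W.Ebar C u) = e C u := fun u _ => by
        rw [W.ec C hC C (subset_refl C) u, margin_self e C (subset_refl C) u]
      rw [Finset.sum_congr rfl this, Finset.filter_ne']
      have herase := Finset.sum_erase_add Finset.univ (fun u : Sec C O => e C u)
        (Finset.mem_univ t)
      rw [(hprob C hC).2] at herase
      linarith
    have hsplit : ∑ B ∈ (V1 ∪ V3) ∪ V4, W.mu B ≤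
        ∑ B ∈ V1 ∪ V3, W.mu B + ∑ B ∈ V4, W.mu B := by
      rw [← Finset.union_sdiff_self_eq_union,
        Finset.sum_union Finset.disjoint_sdiff]
      have := Finset.sum_le_sum_of_subset_of_nonneg
        (Finset.sdiff_subset : V4 \ (V1 ∪ V3) ⊆ V4)
        (fun B hB _ => hnn4 B hB)
      linarith
    have htpos : 0 < e C t := lt_of_le_of_ne ((hprob C hC).1 t) (Ne.symm htne)
    rw [W.wc_univ]
    calc ∑ B ∈ (V1 ∪ V3) ∪ V4, W.mu B
        ≤ ∑ B ∈ V1 ∪ V3, W.mu B + ∑ B ∈ V4, W.mu B := hsplit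
      _ = 1 - e C t := by rw [hT0, hsum4]; ring
      _ < 1 := by linarith
end

section
/- Let e be an empirical model with a combinatorial WPS representation e†. Then e is logically contextual if and only if there is a maximal context C, a section s* ∈ E(C) with μ(Ē(s*)) > 0, and a finite collection of measure-zero events in V_M whose union contains Ē(s*). -/
open MeasureTheory


section Aux

variable {X O Y : Type*} [Fintype X] [DecidableEq X] [Fintype O] [DecidableEq O]
  {M : Finset (Finset X)} {e : (C : Finset X) → Sec C O → ℝ}

lemma resSec_self {U : Finset X} (h : U ⊆ U) (s : Sec U O) : resSec h s = s := by
  funext x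
  exact congrArg s (Subtype.ext rfl)

lemma mu_Ebar (W : ComboWPSRep M e Y) {C : Finset X} (hC : C ∈ M) (t : Sec C O) :
    W.mu (W.Ebar C t) = e C t := by
  rw [W.ec C hC C (le_refl C) t, margin]
  simp only [resSec_self]
  rw [Finset.filter_eq', if_pos (Finset.mem_univ t), Finset.sum_singleton]

lemma Ebar_mono (W : ComboWPSRep M e Y) {U V : Finset X} (h : U ⊆ V) (s : Sec V O) :
    W.Ebar V s ⊆ W.Ebar U (resSec h s) := by
  rw [W.glue V s, W.glue U (resSec h s)]
  intro y hy
  simp only [Set.mem_iInter] at *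
  intro x hx
  have hss : singleSec x hx (resSec h s) = singleSec x (h hx) s := by
    funext z; rfl
  rw [hss]
  exact hy x (h hx)

lemma sec_eq_of_mem (W : ComboWPSRep M e Y) {U : Finset X} {s s' : Sec U O}
    {y : Y} (hy : y ∈ W.Ebar U s) (hy' : y ∈ W.Ebar U s') : s = s' := by
  by_contra hne
  have h := W.sme U s s' hne
  have : y ∈ W.Ebar U s ∩ W.Ebar U s' := ⟨hy, hy'⟩
  rw [h] at this
  exact this

lemma resSec_univ_eq (s : X → O) (C : Finset X) :
    resSec (Finset.subset_univ C) (fun x : {x : X // x ∈ Finset.univ} => s x.1)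
      = restrictGlobal s C := rfl

end Aux

/-- **Proposition 1.2.** For any combinatorial WPS representation `e†` of an
empirical model `e`: `e` is logically contextual if and only if there are a maximal
context `C ∈ M`, a section `s* ∈ E(C)` with `μ(Ē(s*)) > 0`, and a finite collection
of measure-zero events in `V_M` whose union contains `Ē(s*)`. -/
theorem logically_contextual_iff_null_cover_of_positive_event {X O Y : Type*}
    [Fintype X] [DecidableEq X] [Fintype O] [DecidableEq O]
    (M : Finset (Finset X)) (e : (C : Finset X) → Sec C O → ℝ)
    (hmodel : IsEmpiricalModel M e)
    (W : ComboWPSRep M e Y) :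
    LogicallyContextual M e ↔
      ∃ C ∈ M, ∃ t : Sec C O, 0 < W.mu (W.Ebar C t) ∧
        ∃ V : Finset (Set Y), ↑V ⊆ VMSet M W.Ebar ∧ (∀ A ∈ V, W.mu A = 0) ∧
          W.Ebar C t ⊆ ⋃₀ (V : Set (Set Y)) := by
  classical
  constructor
  · rintro ⟨C, hC, t, ht0, hnoext⟩
    refine ⟨C, hC, t, ?_, ?_⟩
    · rw [mu_Ebar W hC]
      exact lt_of_le_of_ne ((hmodel.2.1 C hC).1 t) (Ne.symm ht0)
    · -- every global section restricting to t is non-consistent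
      have hncon : ∀ s : X → O, restrictGlobal s C = t →
          ∃ C' ∈ M, e C' (restrictGlobal s C') = 0 := by
        intro s hs
        by_contra hcon
        push_neg at hcon
        exact hnoext ⟨s, hs, fun C' hC' => hcon C' hC'⟩
      set A : (X → O) → Set Y := fun s =>
        if h : ∃ C' ∈ M, e C' (restrictGlobal s C') = 0 then
          W.Ebar h.choose (restrictGlobal s h.choose) else ∅ with hA
      refine ⟨(Finset.univ.filter fun s : X → O => restrictGlobal s C = t).image A,
        ?_, ?_, ?_⟩
      · intro B hB
        simp only [Finset.coe_image, Set.mem_image, Finset.mem_coe,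
          Finset.mem_filter, Finset.mem_univ, true_and] at hB
        obtain ⟨s, hs, rfl⟩ := hB
        have h := hncon s hs
        rw [hA]
        simp only [dif_pos h]
        exact ⟨h.choose, h.choose_spec.1, restrictGlobal s h.choose, rfl⟩
      · intro B hB
        simp only [Finset.mem_image, Finset.mem_filter, Finset.mem_univ,
          true_and] at hB
        obtain ⟨s, hs, rfl⟩ := hB
        have h := hncon s hs
        rw [hA]
        simp only [dif_pos h]
        rw [mu_Ebar W h.choose_spec.1]
        exact h.choose_spec.2
      · intro y hy
        have hyu : y ∈ ⋃ u : Sec (Finset.univ : Finset X) O, W.Ebar Finset.univ u := by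
          rw [W.exh]; trivial
        obtain ⟨u, hu⟩ := Set.mem_iUnion.mp hyu
        set s : X → O := fun x => u ⟨x, Finset.mem_univ x⟩ with hsdef
        have huu : u = fun x : {x : X // x ∈ Finset.univ} => s x.1 := by
          funext x
          exact congrArg u (Subtype.ext rfl)
        have hyC : y ∈ W.Ebar C (restrictGlobal s C) := by
          have := Ebar_mono W (Finset.subset_univ C) u hu
          rwa [huu, resSec_univ_eq] at this
        have hst : restrictGlobal s C = t := sec_eq_of_mem W hyC hy
        have h := hncon s hst
        refine Set.mem_sUnion.mpr ⟨A s, ?_, ?_⟩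
        · simp only [Finset.coe_image, Set.mem_image, Finset.mem_coe,
            Finset.mem_filter, Finset.mem_univ, true_and]
          exact ⟨s, hst, rfl⟩
        · rw [hA]
          simp only [dif_pos h]
          have := Ebar_mono W (Finset.subset_univ h.choose) u hu
          rwa [huu, resSec_univ_eq] at this
  · rintro ⟨C, hC, t, hpos, V, hVsub, hV0, hcover⟩
    refine ⟨C, hC, t, ?_, ?_⟩
    · rw [← mu_Ebar W hC]
      exact ne_of_gt hpos
    · rintro ⟨s, hres, hcons⟩
      set u : Sec (Finset.univ : Finset X) O := fun x => s x.1 with hu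
      obtain ⟨y, hy⟩ := W.nonempty Finset.univ u
      have hyC : y ∈ W.Ebar C t := by
        have := Ebar_mono W (Finset.subset_univ C) u hy
        rwa [resSec_univ_eq, hres] at this
      obtain ⟨B, hBV, hyB⟩ := Set.mem_sUnion.mp (hcover hyC)
      obtain ⟨C', hC', s', rfl⟩ := hVsub hBV
      have hyC' : y ∈ W.Ebar C' (restrictGlobal s C') := by
        have := Ebar_mono W (Finset.subset_univ C') u hy
        rwa [resSec_univ_eq] at this
      have heq : s' = restrictGlobal s C' := sec_eq_of_mem W hyB hyC'
      have := hV0 _ hBV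
      rw [heq, mu_Ebar W hC'] at this
      exact hcons C' hC' this
end

section
/- Let e be an empirical model with a combinatorial WPS representation e†. Then e is probabilistically contextual if and only if the restricted set function μ|_{V_M} is not a convex combination of restricted valuations V_y|_{V_M} for y ∈ Y, i.e., e† V_M-violates 𝕍-convexity. -/
open MeasureTheory


/-- Auxiliary: summing over fibers of a map. -/
lemma sum_fiber_aux {α β : Type*} [Fintype α] [Fintype β] [DecidableEq β]
    (g : α → β) (f : α → ℝ) (P : β → Prop) [DecidablePred P] :
    ∑ b ∈ Finset.univ.filter P, ∑ a ∈ Finset.univ.filter (fun a => g a = b), f a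
      = ∑ a ∈ Finset.univ.filter (fun a => P (g a)), f a := by
  classical
  calc ∑ b ∈ Finset.univ.filter P, ∑ a ∈ Finset.univ.filter (fun a => g a = b), f a
      = ∑ b : β, ∑ a : α, if P b then (if g a = b then f a else 0) else 0 := by
        rw [Finset.sum_filter]
        refine Finset.sum_congr rfl fun b _ => ?_
        split_ifs with h
        · rw [Finset.sum_filter]
        · simp
    _ = ∑ a : α, ∑ b : β, if g a = b then (if P b then f a else 0) else 0 := by
        rw [Finset.sum_comm]
        refine Finset.sum_congr rfl fun a _ => Finset.sum_congr rfl fun b _ => ?_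
        by_cases h1 : P b <;> by_cases h2 : g a = b <;> simp [h1, h2]
    _ = ∑ a : α, if P (g a) then f a else 0 := by
        refine Finset.sum_congr rfl fun a _ => ?_
        rw [Finset.sum_ite_eq Finset.univ (g a) (fun b => if P b then f a else 0)]
        simp
    _ = ∑ a ∈ Finset.univ.filter (fun a => P (g a)), f a := (Finset.sum_filter _ _).symm

/-- **Proposition 2.3.** For any combinatorial WPS representation `e†` (over a finite
sample space `Y`) of an empirical model `e`: `e` is probabilistically contextual if
and only if the restriction `μ|_{V_M}` is not a convex combination of the restricted
valuations `V_y|_{V_M}` (`V_y(A) = χ_A(y)`, `y ∈ Y`), i.e. `e†` `V_M`-violates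
`𝕍`-convexity. -/
theorem probabilistically_contextual_iff_violates_convexity {X O Y : Type*}
    [Fintype X] [DecidableEq X] [Fintype O] [DecidableEq O] [Fintype Y]
    (M : Finset (Finset X)) (e : (C : Finset X) → Sec C O → ℝ)
    (hmodel : IsEmpiricalModel M e)
    (W : ComboWPSRep M e Y) :
    ProbabilisticallyContextual M e ↔
      ¬ ∃ lam : Y → ℝ, (∀ y, 0 ≤ lam y) ∧ (∑ y, lam y = 1) ∧
        ∀ A ∈ VMSet M W.Ebar,
          W.mu A = ∑ y, lam y * Set.indicator A (fun _ => (1 : ℝ)) y := by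
  classical
  unfold ProbabilisticallyContextual
  rw [not_iff_not]
  -- each y determines, for each measurement x, a unique outcome
  have hY1 : ∀ (y : Y) (x : X), ∃ o : O, y ∈ W.Ebar {x} (fun _ => o) := by
    intro y x
    have hy : y ∈ ⋃ s : Sec ({x} : Finset X) O, W.Ebar {x} s := by
      rw [W.exh ({x} : Finset X)]; exact Set.mem_univ y
    obtain ⟨s, hs⟩ := Set.mem_iUnion.mp hy
    refine ⟨s ⟨x, Finset.mem_singleton_self x⟩, ?_⟩
    have hconst : (fun _ => s ⟨x, Finset.mem_singleton_self x⟩ : Sec ({x} : Finset X) O) = s := by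
      funext a
      have ha : a = ⟨x, Finset.mem_singleton_self x⟩ :=
        Subtype.ext (Finset.mem_singleton.mp a.2)
      rw [ha]
    rw [hconst]; exact hs
  set G : Y → X → O := fun y x => (hY1 y x).choose with hGdef
  have hG : ∀ y x, y ∈ W.Ebar {x} (fun _ => G y x) := fun y x => (hY1 y x).choose_spec
  have huniq : ∀ (y : Y) (x : X) (o : O), y ∈ W.Ebar {x} (fun _ => o) → G y x = o := by
    intro y x o ho
    by_contra hne
    have hdis := W.sme {x} (fun _ => G y x) (fun _ => o)
      (fun he => hne (congrFun he ⟨x, Finset.mem_singleton_self x⟩))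
    have hmem2 : y ∈ W.Ebar {x} (fun _ => G y x) ∩ W.Ebar {x} (fun _ => o) := ⟨hG y x, ho⟩
    rw [hdis] at hmem2
    exact hmem2
  -- membership characterization
  have hmem : ∀ (U : Finset X) (s : Sec U O) (y : Y),
      y ∈ W.Ebar U s ↔ restrictGlobal (G y) U = s := by
    intro U s y
    rw [W.glue U s]
    simp only [Set.mem_iInter]
    constructor
    · intro h
      funext x
      exact huniq y x.1 (s x) (h x.1 x.2)
    · intro h x hx
      have hsx : s ⟨x, hx⟩ = G y x := by rw [← h]; rfl
      have hss : singleSec x hx s = (fun _ => G y x : Sec ({x} : Finset X) O) := by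
        funext a; simp [singleSec, hsx]
      rw [hss]
      exact hG y x
  -- margin over the full context
  have hmarg : ∀ (C : Finset X) (t : Sec C O), margin e C C (Finset.Subset.refl C) t = e C t := by
    intro C t
    unfold margin
    have hres : ∀ t' : Sec C O, resSec (Finset.Subset.refl C) t' = t' := fun t' => rfl
    simp only [hres]
    rw [Finset.filter_eq', if_pos (Finset.mem_univ t), Finset.sum_singleton]
  have hmuE : ∀ C ∈ M, ∀ t : Sec C O, W.mu (W.Ebar C t) = e C t := by
    intro C hC t
    rw [W.ec C hC C (Finset.Subset.refl C) t, hmarg]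
  constructor
  · rintro ⟨d, hd0, hd1, hdm⟩
    set ys : (X → O) → Y :=
      fun s => (W.nonempty Finset.univ (restrictGlobal s Finset.univ)).choose with hysdef
    have hysmem : ∀ s, ys s ∈ W.Ebar Finset.univ (restrictGlobal s Finset.univ) :=
      fun s => (W.nonempty Finset.univ (restrictGlobal s Finset.univ)).choose_spec
    have hGys : ∀ s, G (ys s) = s := by
      intro s
      have h := (hmem Finset.univ (restrictGlobal s Finset.univ) (ys s)).mp (hysmem s)
      funext x
      exact congrFun h ⟨x, Finset.mem_univ x⟩
    refine ⟨fun y => ∑ s ∈ Finset.univ.filter (fun s => ys s = y), d s,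
      fun y => Finset.sum_nonneg fun s _ => hd0 s, ?_, ?_⟩
    · have h := sum_fiber_aux ys d (fun _ => True)
      simp only [Finset.filter_true] at h
      rw [h, hd1]
    · intro A hA
      obtain ⟨C, hC, t, rfl⟩ := hA
      have h1 : ∑ y, (∑ s ∈ Finset.univ.filter (fun s => ys s = y), d s) *
            Set.indicator (W.Ebar C t) (fun _ => (1 : ℝ)) y
          = ∑ y ∈ Finset.univ.filter (fun y => y ∈ W.Ebar C t),
              ∑ s ∈ Finset.univ.filter (fun s => ys s = y), d s := by
        rw [Finset.sum_filter]
        refine Finset.sum_congr rfl fun y _ => ?_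
        by_cases hy : y ∈ W.Ebar C t <;> simp [Set.indicator_apply, hy]
      rw [h1, sum_fiber_aux ys d (fun y => y ∈ W.Ebar C t)]
      have h2 : (Finset.univ.filter (fun s : X → O => ys s ∈ W.Ebar C t))
          = Finset.univ.filter (fun s : X → O => restrictGlobal s C = t) := by
        refine Finset.filter_congr fun s _ => ?_
        rw [hmem C t (ys s), hGys s]
      rw [h2, hdm C hC t, hmuE C hC t]
  · rintro ⟨lam, hl0, hl1, hlA⟩
    refine ⟨fun s => ∑ y ∈ Finset.univ.filter (fun y => G y = s), lam y,
      fun s => Finset.sum_nonneg fun y _ => hl0 y, ?_, ?_⟩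
    · have h := sum_fiber_aux G lam (fun _ => True)
      simp only [Finset.filter_true] at h
      rw [h, hl1]
    · intro C hC t
      rw [sum_fiber_aux G lam (fun s : X → O => restrictGlobal s C = t)]
      have h2 : (Finset.univ.filter (fun y : Y => restrictGlobal (G y) C = t))
          = Finset.univ.filter (fun y : Y => y ∈ W.Ebar C t) := by
        refine Finset.filter_congr fun y _ => ?_
        rw [hmem C t y]
      rw [h2]
      have h3 : W.mu (W.Ebar C t)
          = ∑ y, lam y * Set.indicator (W.Ebar C t) (fun _ => (1 : ℝ)) y :=
        hlA (W.Ebar C t) ⟨C, hC, t, rfl⟩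
      have h4 : ∑ y, lam y * Set.indicator (W.Ebar C t) (fun _ => (1 : ℝ)) y
          = ∑ y ∈ Finset.univ.filter (fun y : Y => y ∈ W.Ebar C t), lam y := by
        rw [Finset.sum_filter]
        refine Finset.sum_congr rfl fun y _ => ?_
        by_cases hy : y ∈ W.Ebar C t <;> simp [Set.indicator_apply, hy]
      rw [← h4, ← h3, hmuE C hC t]
end
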